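/- Suppose the metrics g and ĝ on U satisfy g = ĝλ for a smooth matrix-valued field λ, P is a g-orthogonal projection, and the kinetic-energy matching condition P(∇_X X − ∇̂_X X) = 0 holds at every point of U for every smooth vector field X. Then for all smooth vector fields X and Z on U, (λPX)^i ∂_i(ĝ(Z,Z)) + 2 ĝ([Z, λPX], Z) = 2 Z^i ∂_i(g(PX,Z)) − 2 g(PX, ∇_Z Z) at every point of U, where [Y,W]^k = Y^i ∂_i W^k − W^i ∂_i Y^k is the Lie bracket, ĝ(Y,W) = ĝ_{ij}Y^iW^j, and g(Y,W) = g_{ij}Y^iW^j. -/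

import Mathlib

/-!
Put `V = λPX`. Since `g` and `ĝ` are symmetric and `g = ĝλ`, `g(PX, W) = ĝ(V, W)` for every `W`;
since `P` is `g`-self-adjoint, the matching condition lets `∇_Z Z` be replaced by `∇̂_Z Z` in
`g(PX, ∇_Z Z)`. What is left is an identity for the Levi-Civita connection of `ĝ` alone: metric
compatibility gives `V ĝ(Z,Z) = 2 ĝ(∇̂_V Z, Z)` and `Z ĝ(V,Z) = ĝ(∇̂_Z V, Z) + ĝ(V, ∇̂_Z Z)`, and
torsion-freeness gives `[Z,V] = ∇̂_Z V − ∇̂_V Z`, so both sides equal `2 ĝ(∇̂_Z V, Z)`.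
-/

noncomputable section

open Matrix

/-- Partial derivative of a scalar function in the `i`-th coordinate direction. -/
def pderiv' {n : ℕ} (f : (Fin n → ℝ) → ℝ) (i : Fin n) (x : Fin n → ℝ) : ℝ :=
  fderiv ℝ f x (Pi.single i 1)

/-- Christoffel symbols `Γ^k_{ij}` of a metric `g`. -/
def christoffel {n : ℕ} (g : (Fin n → ℝ) → Matrix (Fin n) (Fin n) ℝ)
    (k i j : Fin n) (x : Fin n → ℝ) : ℝ :=
  (1 / 2) * ∑ l, (g x)⁻¹ k l *
    (pderiv' (fun y => g y j l) i x + pderiv' (fun y => g y i l) j x -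
      pderiv' (fun y => g y i j) l x)

/-- Covariant derivative `(∇_X Y)^k` of the vector field `Y` along `X`. -/
def covDeriv' {n : ℕ} (g : (Fin n → ℝ) → Matrix (Fin n) (Fin n) ℝ)
    (X Y : (Fin n → ℝ) → Fin n → ℝ) (x : Fin n → ℝ) (k : Fin n) : ℝ :=
  (∑ i, X x i * pderiv' (fun y => Y y k) i x) +
    ∑ i, ∑ j, christoffel g k i j x * X x i * Y x j

/-- Pointwise application of a matrix-valued field to a vector field. -/
def mvec {n : ℕ} (A : (Fin n → ℝ) → Matrix (Fin n) (Fin n) ℝ)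
    (X : (Fin n → ℝ) → Fin n → ℝ) (x : Fin n → ℝ) (i : Fin n) : ℝ :=
  ∑ j, A x i j * X x j

/-- Inner product `g(X, Y) = g_{ij} X^i Y^j` of two vector fields. -/
def gip {n : ℕ} (g : (Fin n → ℝ) → Matrix (Fin n) (Fin n) ℝ)
    (X Y : (Fin n → ℝ) → Fin n → ℝ) (x : Fin n → ℝ) : ℝ :=
  ∑ i, ∑ j, g x i j * X x i * Y x j

/-- Lie bracket `[X, Y]^k = X^i ∂_i Y^k − Y^i ∂_i X^k` of two vector fields. -/
def lieBracket' {n : ℕ} (X Y : (Fin n → ℝ) → Fin n → ℝ)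
    (x : Fin n → ℝ) (k : Fin n) : ℝ :=
  (∑ i, X x i * pderiv' (fun y => Y y k) i x) -
    ∑ i, Y x i * pderiv' (fun y => X y k) i x

open Matrix Finset Filter Topology

section Calculus

variable {n : ℕ} {x : Fin n → ℝ}

theorem pderiv'_congr {f g : (Fin n → ℝ) → ℝ} (h : f =ᶠ[𝓝 x] g) (i : Fin n) :
    pderiv' f i x = pderiv' g i x := by
  rw [pderiv', pderiv', h.fderiv_eq]

theorem pderiv'_sum {s : Finset (Fin n)} {f : Fin n → (Fin n → ℝ) → ℝ}
    (hf : ∀ j ∈ s, DifferentiableAt ℝ (f j) x) (i : Fin n) :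
    pderiv' (fun y => ∑ j ∈ s, f j y) i x = ∑ j ∈ s, pderiv' (f j) i x := by
  simp only [pderiv', fderiv_fun_sum hf, _root_.sum_apply]

theorem pderiv'_mul {f g : (Fin n → ℝ) → ℝ} (hf : DifferentiableAt ℝ f x)
    (hg : DifferentiableAt ℝ g x) (i : Fin n) :
    pderiv' (fun y => f y * g y) i x = pderiv' f i x * g x + f x * pderiv' g i x := by
  simp only [pderiv', fderiv_fun_mul hf hg, _root_.add_apply,
    _root_.smul_apply, smul_eq_mul]
  ring

theorem pderiv'_gip {h : (Fin n → ℝ) → Matrix (Fin n) (Fin n) ℝ} {A B : (Fin n → ℝ) → Fin n → ℝ}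
    (hh : ∀ j k, DifferentiableAt ℝ (fun y => h y j k) x)
    (hA : ∀ j, DifferentiableAt ℝ (fun y => A y j) x)
    (hB : ∀ k, DifferentiableAt ℝ (fun y => B y k) x) (i : Fin n) :
    pderiv' (fun y => gip h A B y) i x =
      ∑ j, ∑ k, (pderiv' (fun y => h y j k) i x * A x j * B x k +
        h x j k * pderiv' (fun y => A y j) i x * B x k +
        h x j k * A x j * pderiv' (fun y => B y k) i x) := by
  have hterm j k : DifferentiableAt ℝ (fun y => h y j k * A y j * B y k) x :=
    ((hh j k).mul (hA j)).mul (hB k)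
  unfold gip
  rw [pderiv'_sum fun j _ => DifferentiableAt.fun_sum fun k _ => hterm j k]
  refine sum_congr rfl fun j _ => ?_
  rw [pderiv'_sum fun k _ => hterm j k]
  refine sum_congr rfl fun k _ => ?_
  rw [pderiv'_mul ((hh j k).fun_mul (hA j)) (hB k), pderiv'_mul (hh j k) (hA j)]
  ring

theorem pderiv'_comm_of_eventually_isSymm {h : (Fin n → ℝ) → Matrix (Fin n) (Fin n) ℝ}
    (hs : ∀ᶠ y in 𝓝 x, (h y).IsSymm) (i a b : Fin n) :
    pderiv' (fun y => h y a b) i x = pderiv' (fun y => h y b a) i x :=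
  pderiv'_congr (hs.mono fun _ hy => hy.apply b a) i

end Calculus

theorem Matrix.mulVec_dotProduct_mulVec_of_isSymm {n : Type*} [Fintype n]
    {G P : Matrix n n ℝ} (hG : G.IsSymm) (hGP : (G * P).IsSymm) (v w : n → ℝ) :
    (P *ᵥ v) ⬝ᵥ (G *ᵥ w) = v ⬝ᵥ ((G * P) *ᵥ w) := by
  have hPG : Pᵀ * G = G * P := by rw [← hGP.eq, transpose_mul, hG.eq]
  rw [← vecMul_transpose, dotProduct_mulVec, vecMul_vecMul, hPG, ← dotProduct_mulVec]

section Christoffel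

variable {n : ℕ} (g : (Fin n → ℝ) → Matrix (Fin n) (Fin n) ℝ) (x : Fin n → ℝ)

/-- The Christoffel symbol of the first kind `Γ_{l,ij}`, lowered index first. -/
def christoffelFirst (l i j : Fin n) : ℝ :=
  (1 / 2) * (pderiv' (fun y => g y j l) i x + pderiv' (fun y => g y i l) j x -
    pderiv' (fun y => g y i j) l x)

theorem christoffel_eq_inv_mulVec (k i j : Fin n) :
    christoffel g k i j x = ((g x)⁻¹ *ᵥ fun l => christoffelFirst g x l i j) k := by
  simp only [christoffel, christoffelFirst, mulVec, dotProduct, mul_sum]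
  exact sum_congr rfl fun l _ => by ring

variable {g x}

theorem mulVec_christoffel (hg : IsUnit (g x)) (i j : Fin n) :
    (g x *ᵥ fun k => christoffel g k i j x) = fun l => christoffelFirst g x l i j := by
  rw [funext (christoffel_eq_inv_mulVec g x · i j), mulVec_mulVec,
    mul_nonsing_inv _ ((isUnit_iff_isUnit_det _).1 hg), one_mulVec]

theorem christoffelFirst_add_christoffelFirst (hs : ∀ᶠ y in 𝓝 x, (g y).IsSymm) (l i j : Fin n) :
    christoffelFirst g x l i j + christoffelFirst g x j i l = pderiv' (fun y => g y j l) i x := by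
  simp only [christoffelFirst, pderiv'_comm_of_eventually_isSymm hs _ l j,
    pderiv'_comm_of_eventually_isSymm hs _ i j]
  ring

theorem christoffel_comm (hs : ∀ᶠ y in 𝓝 x, (g y).IsSymm) (k i j : Fin n) :
    christoffel g k i j x = christoffel g k j i x := by
  simp only [christoffel, pderiv'_comm_of_eventually_isSymm hs _ i j]
  congr 1
  exact sum_congr rfl fun l _ => by ring

end Christoffel

section Connection

variable {n : ℕ} {h : (Fin n → ℝ) → Matrix (Fin n) (Fin n) ℝ} {x : Fin n → ℝ}

theorem gip_eq_dotProduct (A B : (Fin n → ℝ) → Fin n → ℝ) :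
    gip h A B x = A x ⬝ᵥ (h x *ᵥ B x) := by
  simp only [gip, dotProduct, mulVec, mul_sum]
  exact sum_congr rfl fun i _ => sum_congr rfl fun j _ => by ring

theorem mulVec_sum_christoffel_mul (hh : IsUnit (h x)) (a b : Fin n → ℝ) :
    (h x *ᵥ fun k => ∑ i, ∑ j, christoffel h k i j x * a i * b j) =
      fun l => ∑ i, ∑ j, christoffelFirst h x l i j * a i * b j := by
  ext l
  simp only [← fun i j => congrFun (mulVec_christoffel hh i j) l, mulVec, dotProduct, mul_sum,
    sum_mul]
  conv_rhs => rw [sum_comm_cycle]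
  exact sum_congr rfl fun i _ => sum_congr rfl fun j _ => sum_congr rfl fun k _ => by ring

theorem christoffel_dotProduct_add_dotProduct_christoffel (hs : ∀ᶠ y in 𝓝 x, (h y).IsSymm)
    (hh : IsUnit (h x)) (a b c : Fin n → ℝ) :
    (fun k => ∑ i, ∑ j, christoffel h k i j x * a i * b j) ⬝ᵥ (h x *ᵥ c) +
        b ⬝ᵥ (h x *ᵥ fun k => ∑ i, ∑ j, christoffel h k i j x * a i * c j) =
      ∑ i, a i * ∑ j, ∑ k, pderiv' (fun y => h y j k) i x * b j * c k := by
  have hsymm : ∀ u v, u ⬝ᵥ (h x *ᵥ v) = (h x *ᵥ u) ⬝ᵥ v := fun u v => by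
    rw [dotProduct_mulVec, ← mulVec_transpose, hs.self_of_nhds.eq]
  rw [hsymm, mulVec_sum_christoffel_mul hh, dotProduct_comm, mulVec_sum_christoffel_mul hh]
  simp only [dotProduct, mul_sum, ← christoffelFirst_add_christoffelFirst hs, mul_add,
    add_mul, sum_add_distrib]
  congr 1
  · conv_rhs => rw [sum_comm_cycle]
    exact sum_congr rfl fun k _ => sum_congr rfl fun i _ => sum_congr rfl fun j _ => by ring
  · conv_rhs => rw [sum_comm]
    exact sum_congr rfl fun k _ => sum_congr rfl fun i _ => sum_congr rfl fun j _ => by ring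

theorem covDeriv'_apply_eq_add (A B : (Fin n → ℝ) → Fin n → ℝ) :
    covDeriv' h A B x = (fun k => ∑ i, A x i * pderiv' (fun y => B y k) i x) +
      fun k => ∑ i, ∑ j, christoffel h k i j x * A x i * B x j :=
  rfl

theorem sum_mul_pderiv'_gip {A B C : (Fin n → ℝ) → Fin n → ℝ}
    (hh : ∀ j k, DifferentiableAt ℝ (fun y => h y j k) x)
    (hB : ∀ j, DifferentiableAt ℝ (fun y => B y j) x)
    (hC : ∀ k, DifferentiableAt ℝ (fun y => C y k) x)
    (hs : ∀ᶠ y in 𝓝 x, (h y).IsSymm) (hu : IsUnit (h x)) :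
    ∑ i, A x i * pderiv' (fun y => gip h B C y) i x =
      gip h (covDeriv' h A B) C x + gip h B (covDeriv' h A C) x := by
  rw [gip_eq_dotProduct, gip_eq_dotProduct, covDeriv'_apply_eq_add, covDeriv'_apply_eq_add,
    add_dotProduct, mulVec_add, dotProduct_add, add_add_add_comm,
    christoffel_dotProduct_add_dotProduct_christoffel hs hu]
  simp only [pderiv'_gip hh hB hC, dotProduct, mulVec, mul_sum, sum_mul, mul_add, sum_add_distrib]
  conv_lhs => rw [add_rotate]
  congr 2 <;>
  · conv_rhs => rw [sum_comm_cycle]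
    exact sum_congr rfl fun i _ => sum_congr rfl fun j _ => sum_congr rfl fun k _ => by ring

theorem covDeriv'_sub_covDeriv' (hs : ∀ᶠ y in 𝓝 x, (h y).IsSymm) (A B : (Fin n → ℝ) → Fin n → ℝ) :
    covDeriv' h A B x - covDeriv' h B A x = lieBracket' A B x := by
  ext k
  have hΓ : ∑ i, ∑ j, christoffel h k i j x * A x i * B x j =
      ∑ i, ∑ j, christoffel h k i j x * B x i * A x j := by
    rw [sum_comm]
    exact sum_congr rfl fun i _ => sum_congr rfl fun j _ => by
      rw [christoffel_comm hs]; ring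
  simp only [Pi.sub_apply, covDeriv', lieBracket', hΓ]
  ring

theorem gip_comm (hs : (h x).IsSymm) (A B : (Fin n → ℝ) → Fin n → ℝ) :
    gip h A B x = gip h B A x := by
  rw [gip, sum_comm]
  exact sum_congr rfl fun i _ => sum_congr rfl fun j _ => by rw [hs.apply]; ring

theorem sum_mul_pderiv'_gip_add_two_mul_gip_lieBracket' {V Z : (Fin n → ℝ) → Fin n → ℝ}
    (hh : ∀ j k, DifferentiableAt ℝ (fun y => h y j k) x)
    (hV : ∀ j, DifferentiableAt ℝ (fun y => V y j) x)
    (hZ : ∀ k, DifferentiableAt ℝ (fun y => Z y k) x)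
    (hs : ∀ᶠ y in 𝓝 x, (h y).IsSymm) (hu : IsUnit (h x)) :
    ∑ i, V x i * pderiv' (fun y => gip h Z Z y) i x + 2 * gip h (lieBracket' Z V) Z x =
      2 * ∑ i, Z x i * pderiv' (fun y => gip h V Z y) i x - 2 * gip h V (covDeriv' h Z Z) x := by
  rw [sum_mul_pderiv'_gip hh hZ hZ hs hu, sum_mul_pderiv'_gip hh hV hZ hs hu,
    gip_comm hs.self_of_nhds Z]
  simp only [gip_eq_dotProduct, ← covDeriv'_sub_covDeriv' hs, sub_dotProduct]
  ring

end Connection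

theorem gip_mvec_left {n : ℕ} {G P : (Fin n → ℝ) → Matrix (Fin n) (Fin n) ℝ} {x : Fin n → ℝ}
    (hG : (G x).IsSymm) (hGP : (G x * P x).IsSymm) (X W : (Fin n → ℝ) → Fin n → ℝ) :
    gip G (mvec P X) W x = X x ⬝ᵥ (G x *ᵥ (P x *ᵥ W x)) := by
  rw [gip_eq_dotProduct, mulVec_mulVec]
  exact mulVec_dotProduct_mulVec_of_isSymm hG hGP _ _

theorem differentiableAt_mvec {n : ℕ} {A : (Fin n → ℝ) → Matrix (Fin n) (Fin n) ℝ}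
    {X : (Fin n → ℝ) → Fin n → ℝ} {x : Fin n → ℝ}
    (hA : ∀ i j, DifferentiableAt ℝ (fun y => A y i j) x)
    (hX : ∀ j, DifferentiableAt ℝ (fun y => X y j) x) (i : Fin n) :
    DifferentiableAt ℝ (fun y => mvec A X y i) x :=
  DifferentiableAt.fun_sum fun j _ => (hA i j).fun_mul (hX j)

theorem statement1_general {n : ℕ} (U : Set (Fin n → ℝ)) (hU : IsOpen U)
    (g gh lam P : (Fin n → ℝ) → Matrix (Fin n) (Fin n) ℝ)
    -- smoothness of all the fields on `U`
    (hghsm : ∀ i j, ContDiffOn ℝ (⊤ : ℕ∞) (fun x => gh x i j) U)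
    (hlamsm : ∀ i j, ContDiffOn ℝ (⊤ : ℕ∞) (fun x => lam x i j) U)
    (hPsm : ∀ i j, ContDiffOn ℝ (⊤ : ℕ∞) (fun x => P x i j) U)
    -- `g` and `ĝ` are metrics (symmetric positive definite)
    (hgpos : ∀ x ∈ U, (g x).PosDef)
    (hghpos : ∀ x ∈ U, (gh x).PosDef)
    -- `g = ĝ λ`
    (hglam : ∀ x ∈ U, g x = gh x * lam x)
    -- `P` is a `g`-orthogonal projection
    (hPsym : ∀ x ∈ U, (g x * P x)ᵀ = g x * P x)
    -- kinetic-energy matching condition `P(∇_X X − ∇̂_X X) = 0` for all smooth `X`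
    (hmatch : ∀ X : (Fin n → ℝ) → Fin n → ℝ,
      (∀ k, ContDiffOn ℝ (⊤ : ℕ∞) (fun x => X x k) U) →
      ∀ x ∈ U, ∀ i, (∑ j, P x i j * (covDeriv' g X X x j - covDeriv' gh X X x j)) = 0) :
    ∀ X Z : (Fin n → ℝ) → Fin n → ℝ,
      (∀ k, ContDiffOn ℝ (⊤ : ℕ∞) (fun x => X x k) U) →
      (∀ k, ContDiffOn ℝ (⊤ : ℕ∞) (fun x => Z x k) U) →
      ∀ x ∈ U,
        (∑ i, mvec lam (mvec P X) x i * pderiv' (fun y => gip gh Z Z y) i x) +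
            2 * gip gh (lieBracket' Z (mvec lam (mvec P X))) Z x =
          2 * (∑ i, Z x i * pderiv' (fun y => gip g (mvec P X) Z y) i x) -
            2 * gip g (mvec P X) (covDeriv' g Z Z) x := by
  intro X Z hX hZ x hx
  have hUx : U ∈ 𝓝 x := hU.mem_nhds hx
  have hdiff {f : (Fin n → ℝ) → ℝ} (hf : ContDiffOn ℝ (⊤ : ℕ∞) f U) : DifferentiableAt ℝ f x :=
    (hf.differentiableOn (by simp)).differentiableAt hUx
  have hgs : ∀ y ∈ U, (g y).IsSymm := fun y hy => isHermitian_iff_isSymm.1 (hgpos y hy).1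
  have hghs : ∀ y ∈ U, (gh y).IsSymm := fun y hy => isHermitian_iff_isSymm.1 (hghpos y hy).1
  set V := mvec lam (mvec P X)
  have hlower (W : (Fin n → ℝ) → Fin n → ℝ) : ∀ y ∈ U, gip g (mvec P X) W y = gip gh V W y :=
    fun y hy => by
      rw [gip_mvec_left (hghs y hy) (hglam y hy ▸ hgs y hy), mulVec_mulVec, ← hglam y hy,
        gip_eq_dotProduct]
  have hmatchZ : P x *ᵥ covDeriv' g Z Z x = P x *ᵥ covDeriv' gh Z Z x := by
    rw [← sub_eq_zero, ← mulVec_sub]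
    exact funext (hmatch Z hZ x hx)
  have hproj : gip g (mvec P X) (covDeriv' g Z Z) x = gip g (mvec P X) (covDeriv' gh Z Z) x := by
    rw [gip_mvec_left (hgs x hx) (hPsym x hx), gip_mvec_left (hgs x hx) (hPsym x hx), hmatchZ]
  have hderiv : ∀ i, pderiv' (fun y => gip g (mvec P X) Z y) i x =
      pderiv' (fun y => gip gh V Z y) i x :=
    pderiv'_congr (eventually_of_mem hUx (hlower Z))
  simp only [hderiv, hproj, hlower _ x hx]
  exact sum_mul_pderiv'_gip_add_two_mul_gip_lieBracket' (fun j k => hdiff (hghsm j k))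
    (differentiableAt_mvec (fun i j => hdiff (hlamsm i j))
      (differentiableAt_mvec (fun i j => hdiff (hPsm i j)) fun j => hdiff (hX j)))
    (fun k => hdiff (hZ k)) (eventually_of_mem hUx hghs) (hghpos x hx).isUnit

theorem statement1 {n : ℕ} (U : Set (Fin n → ℝ)) (hU : IsOpen U)
    (g gh lam P : (Fin n → ℝ) → Matrix (Fin n) (Fin n) ℝ)
    -- smoothness of all the fields on `U`
    (hgsm : ∀ i j, ContDiffOn ℝ (⊤ : ℕ∞) (fun x => g x i j) U)
    (hghsm : ∀ i j, ContDiffOn ℝ (⊤ : ℕ∞) (fun x => gh x i j) U)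
    (hlamsm : ∀ i j, ContDiffOn ℝ (⊤ : ℕ∞) (fun x => lam x i j) U)
    (hPsm : ∀ i j, ContDiffOn ℝ (⊤ : ℕ∞) (fun x => P x i j) U)
    -- `g` and `ĝ` are metrics (symmetric positive definite)
    (hgpos : ∀ x ∈ U, (g x).PosDef)
    (hghpos : ∀ x ∈ U, (gh x).PosDef)
    -- `g = ĝ λ`
    (hglam : ∀ x ∈ U, g x = gh x * lam x)
    -- `P` is a `g`-orthogonal projection
    (hPP : ∀ x ∈ U, P x * P x = P x)
    (hPsym : ∀ x ∈ U, (g x * P x)ᵀ = g x * P x)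
    -- kinetic-energy matching condition `P(∇_X X − ∇̂_X X) = 0` for all smooth `X`
    (hmatch : ∀ X : (Fin n → ℝ) → Fin n → ℝ,
      (∀ k, ContDiffOn ℝ (⊤ : ℕ∞) (fun x => X x k) U) →
      ∀ x ∈ U, ∀ i, (∑ j, P x i j * (covDeriv' g X X x j - covDeriv' gh X X x j)) = 0) :
    ∀ X Z : (Fin n → ℝ) → Fin n → ℝ,
      (∀ k, ContDiffOn ℝ (⊤ : ℕ∞) (fun x => X x k) U) →
      (∀ k, ContDiffOn ℝ (⊤ : ℕ∞) (fun x => Z x k) U) →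
      ∀ x ∈ U,
        (∑ i, mvec lam (mvec P X) x i * pderiv' (fun y => gip gh Z Z y) i x) +
            2 * gip gh (lieBracket' Z (mvec lam (mvec P X))) Z x =
          2 * (∑ i, Z x i * pderiv' (fun y => gip g (mvec P X) Z y) i x) -
            2 * gip g (mvec P X) (covDeriv' g Z Z) x :=
  statement1_general U hU g gh lam P hghsm hlamsm hPsm hgpos hghpos hglam hPsym hmatch
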